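/- Let b > 1 and n > 1 be integers, a a positive integer, and i ∈ {3, …, n} with gcd(r_b(i), a) = 1. Writing a^{(i)}_j = r_b(i) + a·r_b(j-1), an element ω belongs to the Apéry set Ap(S_a(b,i), r_b(i)) if and only if either ω = b·a^{(i)}_i, or there exist (u_2, …, u_{i-1}) ∈ R(b,i-1) and u_i ∈ {0, …, b−1} such that ω = ∑_{j=2}^{i-1} u_j·a^{(i-1)}_j + b^{i-1}·(∑_{j=2}^{i-1} u_j) + u_i·a^{(i)}_i, where a^{(i-1)}_j = r_b(i-1) + a·r_b(j-1). -/

import Mathlib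

/-- The repunit number in base `b` of length `ℓ`: `r_b(ℓ) = ∑_{j=0}^{ℓ-1} b^j`. -/
def repunit (b ℓ : ℕ) : ℕ := ∑ j ∈ Finset.range ℓ, b ^ j

/-- `aseq b a i j = a^{(i)}_j = r_b(i) + a·r_b(j-1)`. -/
def aseq (b a i j : ℕ) : ℕ := repunit b i + a * repunit b (j - 1)

/-- The additive submonoid `S_a(b,i)` of `ℕ` generated by `{a^{(i)}_j : j ≥ 1}`. -/
def grep (b a i : ℕ) : AddSubmonoid ℕ :=
  AddSubmonoid.closure {x | ∃ j, 1 ≤ j ∧ x = aseq b a i j}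

/-- The Apéry set of `S` with respect to `s`: elements `ω ∈ S` with `ω - s ∉ S`
(i.e. there is no `t ∈ S` with `ω = t + s`). -/
def Apery (S : AddSubmonoid ℕ) (s : ℕ) : Set ℕ :=
  {ω | ω ∈ S ∧ ¬ ∃ t ∈ S, ω = t + s}

/-- The set `R(b,ℓ)` of tuples `(u_2, …, u_ℓ) ∈ ℕ^{ℓ-1}` (a tuple with `m = ℓ-1` entries,
where coordinate `j : Fin m` represents `u_{j+2}`) such that every entry is `≤ b`, and
whenever an entry equals `b`, all previous entries are `0`. -/
def RFin (b m : ℕ) : Finset (Fin m → ℕ) :=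
  (Fintype.piFinset fun _ => Finset.range (b + 1)).filter
    (fun u => ∀ j, u j = b → ∀ k, k < j → u k = 0)


lemma repunit_zero (b : ℕ) : repunit b 0 = 0 := by simp [repunit]

lemma repunit_succ' (b ℓ : ℕ) : repunit b (ℓ+1) = repunit b ℓ + b ^ ℓ := by
  simp [repunit, Finset.sum_range_succ]

lemma repunit_succ (b ℓ : ℕ) : repunit b (ℓ+1) = b * repunit b ℓ + 1 := by
  rw [repunit, Finset.sum_range_succ', repunit, Finset.mul_sum]
  simp [pow_succ, mul_comm]

lemma repunit_pos (b ℓ : ℕ) : 0 < repunit b (ℓ+1) := by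
  rw [repunit_succ]; omega

lemma repunit_strictMono (b : ℕ) (hb : 1 ≤ b) : StrictMono (repunit b) := by
  intro x y h
  induction y with
  | zero => omega
  | succ n ih =>
    rcases Nat.lt_succ_iff_lt_or_eq.mp h with h' | rfl
    · exact lt_of_lt_of_le (ih h') (by rw [repunit_succ']; exact Nat.le_add_right _ _)
    · rw [repunit_succ']
      have : 0 < b ^ x := Nat.pow_pos hb
      omega

lemma repunit_add (b x y : ℕ) : repunit b (x + y) = repunit b x + b ^ x * repunit b y := by
  induction y with
  | zero => simp [repunit]
  | succ n ih =>
    rw [show x + (n+1) = (x+n)+1 by ring, repunit_succ', ih, repunit_succ', pow_add]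
    ring

lemma pow_eq_repunit (b n : ℕ) (hb : 1 ≤ b) : b ^ n = (b - 1) * repunit b n + 1 := by
  induction n with
  | zero => simp [repunit]
  | succ k ih =>
    rw [pow_succ, ih, repunit_succ]
    cases b with
    | zero => omega
    | succ b' => ring_nf; omega

def gam (b : ℕ) : ℕ → ℕ → ℕ
  | 0, v => v
  | (ℓ+1), v => v / repunit b (ℓ+1) + gam b ℓ (v % repunit b (ℓ+1))

lemma gam_zero (b ℓ : ℕ) : gam b ℓ 0 = 0 := by
  induction ℓ with
  | zero => rfl
  | succ n ih => simp [gam, ih]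

lemma gam_small (b ℓ v : ℕ) (h : v < repunit b (ℓ+1)) : gam b (ℓ+1) v = gam b ℓ v := by
  simp [gam, Nat.div_eq_of_lt h, Nat.mod_eq_of_lt h]

lemma gam_add_mul (b ℓ k v : ℕ) :
    gam b (ℓ+1) (v + k * repunit b (ℓ+1)) = gam b (ℓ+1) v + k := by
  have hR : 0 < repunit b (ℓ+1) := repunit_pos b ℓ
  simp only [gam, Nat.add_mul_div_right _ _ hR, Nat.add_mul_mod_self_right]
  ring

lemma gam_mul_top (b ℓ k : ℕ) : gam b (ℓ+1) (k * repunit b (ℓ+1)) = k := by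
  have := gam_add_mul b ℓ k 0
  simpa [gam_zero, gam] using this

lemma gam_mul_rep_le (b ℓ k : ℕ) : gam b ℓ (k * repunit b ℓ) ≤ k := by
  cases ℓ with
  | zero => simp [repunit, gam]
  | succ n => rw [gam_mul_top]

-- G3
lemma gam_le_succ (b : ℕ) (hb : 1 ≤ b) (ℓ : ℕ) : ∀ v, gam b ℓ v ≤ gam b ℓ (v + 1) + (b - 1) := by
  induction ℓ with
  | zero => intro v; simp [gam]; omega
  | succ n ih =>
    intro v
    set R := repunit b (n+1) with hRdef
    have hR : 0 < R := repunit_pos b n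
    have hmod : v % R < R := Nat.mod_lt _ hR
    have hdm : v % R + v / R * R = v := Nat.mod_add_div' v R
    have h1 : gam b (n+1) v = gam b n (v % R) + v / R := by
      conv_lhs => rw [← hdm]
      rw [gam_add_mul, gam_small _ _ _ hmod]
    by_cases hcase : v % R + 1 < R
    · have h2 : gam b (n+1) (v + 1) = gam b n (v % R + 1) + v / R := by
        have e1 : v + 1 = (v % R + 1) + v / R * R := by omega
        rw [e1, gam_add_mul, gam_small _ _ _ hcase]
      have := ih (v % R)
      omega
    · have hmodeq : v % R + 1 = R := by omega
      have h2 : gam b (n+1) (v + 1) = v / R + 1 := by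
        have e2 : (v / R + 1) * R = v / R * R + R := by ring
        have e1 : v + 1 = 0 + (v / R + 1) * R := by omega
        rw [e1, gam_add_mul, gam_zero]; omega
      have h3 : gam b n (v % R) ≤ b := by
        have hmr : v % R = b * repunit b n := by
          rw [repunit_succ] at hRdef; omega
        rw [hmr]
        exact gam_mul_rep_le b n b
      omega

-- G2
lemma gam_add_top (b : ℕ) (hb : 1 ≤ b) (ℓ v : ℕ) :
    gam b ℓ v + 1 ≤ gam b ℓ (v + repunit b (ℓ+1)) := by
  cases ℓ with
  | zero =>
    have : repunit b 1 = 1 := by simp [repunit]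
    simp [gam, this]
  | succ n =>
    have hsp : v + repunit b (n+2) = (v + 1) + b * repunit b (n+1) := by
      rw [repunit_succ b (n+1)]; ring
    rw [hsp, gam_add_mul]
    have := gam_le_succ b hb (n+1) v
    omega

lemma gam_subadd (b : ℕ) (hb : 1 ≤ b) (ℓ : ℕ) : ∀ x y, gam b ℓ (x + y) ≤ gam b ℓ x + gam b ℓ y := by
  induction ℓ with
  | zero => intro x y; simp [gam]
  | succ n ih =>
    intro x y
    set R := repunit b (n+1) with hRdef
    have hR : 0 < R := repunit_pos b n
    have hxdm : x % R + x / R * R = x := Nat.mod_add_div' x R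
    have hydm : y % R + y / R * R = y := Nat.mod_add_div' y R
    have hxm : x % R < R := Nat.mod_lt _ hR
    have hym : y % R < R := Nat.mod_lt _ hR
    have h1 : gam b (n+1) x = gam b n (x % R) + x / R := by
      conv_lhs => rw [← hxdm]
      rw [gam_add_mul, gam_small _ _ _ hxm]
    have h2 : gam b (n+1) y = gam b n (y % R) + y / R := by
      conv_lhs => rw [← hydm]
      rw [gam_add_mul, gam_small _ _ _ hym]
    have hxy := ih (x % R) (y % R)
    by_cases hc : x % R + y % R < R
    · have h3 : gam b (n+1) (x + y) = gam b n (x % R + y % R) + (x / R + y / R) := by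
        have e2 : (x / R + y / R) * R = x / R * R + y / R * R := by ring
        have e1 : x + y = (x % R + y % R) + (x / R + y / R) * R := by omega
        rw [e1, gam_add_mul, gam_small _ _ _ hc]
      omega
    · have hlt : x % R + y % R - R < R := by omega
      have h3 : gam b (n+1) (x + y) = gam b n (x % R + y % R - R) + (x / R + y / R + 1) := by
        have e2 : (x / R + y / R + 1) * R = x / R * R + y / R * R + R := by ring
        have e1 : x + y = (x % R + y % R - R) + (x / R + y / R + 1) * R := by omega
        rw [e1, gam_add_mul, gam_small _ _ _ hlt]
      have h4 : gam b n (x % R + y % R - R) + 1 ≤ gam b n (x % R + y % R) := by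
        have := gam_add_top b hb n (x % R + y % R - R)
        rw [show x % R + y % R - R + repunit b (n+1) = x % R + y % R by omega] at this
        exact this
      omega

lemma gam_rep_le (b : ℕ) (hb : 1 ≤ b) : ∀ ℓ t, t ≤ ℓ → gam b ℓ (repunit b t) ≤ 1 := by
  intro ℓ
  induction ℓ with
  | zero => intro t ht; interval_cases t; simp [repunit, gam]
  | succ n ih =>
    intro t ht
    rcases Nat.lt_or_ge t (n+1) with h | h
    · have : repunit b t < repunit b (n+1) := repunit_strictMono b hb h
      rw [gam_small _ _ _ this]
      exact ih t (by omega)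
    · have : t = n + 1 := by omega
      subst this
      have := gam_mul_top b n 1
      simp only [one_mul] at this
      omega

lemma mem_RFin {b m : ℕ} {u : Fin m → ℕ} :
    u ∈ RFin b m ↔ (∀ j, u j ≤ b) ∧ ∀ j, u j = b → ∀ k, k < j → u k = 0 := by
  simp [RFin, Finset.mem_filter, Fintype.mem_piFinset, Finset.mem_range, Nat.lt_succ_iff]

def Vsum (b : ℕ) {ℓ : ℕ} (u : Fin ℓ → ℕ) : ℕ := ∑ j, u j * repunit b (j.val + 1)

lemma Vsum_snoc (b ℓ : ℕ) (u : Fin ℓ → ℕ) (t : ℕ) :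
    Vsum b (Fin.snoc u t) = Vsum b u + t * repunit b (ℓ + 1) := by
  unfold Vsum
  rw [Fin.sum_univ_castSucc]
  simp [Fin.snoc_castSucc, Fin.snoc_last]

lemma sum_snoc (ℓ : ℕ) (u : Fin ℓ → ℕ) (t : ℕ) :
    (∑ j, (Fin.snoc u t : Fin (ℓ+1) → ℕ) j) = (∑ j, u j) + t := by
  rw [Fin.sum_univ_castSucc]
  simp [Fin.snoc_castSucc, Fin.snoc_last]

def gtup (b : ℕ) : (ℓ : ℕ) → ℕ → Fin ℓ → ℕ
  | 0, _ => Fin.elim0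
  | (ℓ+1), w => Fin.snoc (gtup b ℓ (w % repunit b (ℓ+1))) (w / repunit b (ℓ+1))

lemma gtup_zero (b : ℕ) : ∀ ℓ, gtup b ℓ 0 = fun _ => 0 := by
  intro ℓ
  induction ℓ with
  | zero => funext j; exact j.elim0
  | succ n ih =>
    funext j
    simp only [gtup, Nat.zero_mod, Nat.zero_div, ih]
    induction j using Fin.lastCases with
    | last => simp [Fin.snoc_last]
    | cast i => simp [Fin.snoc_castSucc]

lemma gtup_val (b : ℕ) : ∀ ℓ w, w < repunit b (ℓ+1) → Vsum b (gtup b ℓ w) = w := by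
  intro ℓ
  induction ℓ with
  | zero =>
    intro w hw
    have : repunit b 1 = 1 := by simp [repunit]
    rw [this] at hw
    interval_cases w
    simp [Vsum]
  | succ n ih =>
    intro w hw
    have hR : 0 < repunit b (n+1) := repunit_pos b n
    simp only [gtup, Vsum_snoc]
    rw [ih _ (Nat.mod_lt _ hR)]
    exact Nat.mod_add_div' w _

lemma gtup_sum (b : ℕ) : ∀ ℓ w, w < repunit b (ℓ+1) → (∑ j, gtup b ℓ w j) = gam b ℓ w := by
  intro ℓ
  induction ℓ with
  | zero =>
    intro w hw
    have : repunit b 1 = 1 := by simp [repunit]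
    rw [this] at hw
    interval_cases w
    simp [gam]
  | succ n ih =>
    intro w hw
    have hR : 0 < repunit b (n+1) := repunit_pos b n
    simp only [gtup, sum_snoc]
    rw [ih _ (Nat.mod_lt _ hR)]
    simp [gam]; omega

lemma gtup_mem (b : ℕ) (hb : 1 ≤ b) : ∀ ℓ w, w < repunit b (ℓ+1) → gtup b ℓ w ∈ RFin b ℓ := by
  intro ℓ
  induction ℓ with
  | zero => intro w hw; rw [mem_RFin]; exact ⟨fun j => j.elim0, fun j => j.elim0⟩
  | succ n ih =>
    intro w hw
    have hR : 0 < repunit b (n+1) := repunit_pos b n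
    have hwle : w ≤ b * repunit b (n+1) := by
      rw [repunit_succ b (n+1)] at hw; omega
    have htop : w / repunit b (n+1) ≤ b := by
      rw [Nat.div_le_iff_le_mul_add_pred hR]
      calc w ≤ b * repunit b (n+1) := hwle
        _ ≤ repunit b (n+1) * b + (repunit b (n+1) - 1) := by rw [mul_comm]; omega
    have hinner := ih (w % repunit b (n+1)) (Nat.mod_lt _ hR)
    rw [mem_RFin] at hinner ⊢
    constructor
    · intro j
      induction j using Fin.lastCases with
      | last => simpa only [gtup, Fin.snoc_last] using htop
      | cast i => simpa only [gtup, Fin.snoc_castSucc] using hinner.1 i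
    · intro j hj k hk
      induction j using Fin.lastCases with
      | last =>
        simp only [gtup, Fin.snoc_last] at hj
        have hwge : b * repunit b (n+1) ≤ w := by
          calc b * repunit b (n+1) = w / repunit b (n+1) * repunit b (n+1) := by rw [hj]
            _ ≤ w := Nat.div_mul_le_self _ _
        have hweq : w = b * repunit b (n+1) := le_antisymm hwle hwge
        have hmod : w % repunit b (n+1) = 0 := by
          rw [hweq, mul_comm]; exact Nat.mul_mod_right _ _
        induction k using Fin.lastCases with
        | last => exact absurd hk (lt_irrefl _)
        | cast k' =>
          simp only [gtup, Fin.snoc_castSucc, hmod, gtup_zero]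
      | cast i =>
        have hj' : gtup b n (w % repunit b (n+1)) i = b := by
          simpa only [gtup, Fin.snoc_castSucc] using hj
        induction k using Fin.lastCases with
        | last =>
          exfalso
          have : (Fin.last n : Fin (n+1)) < Fin.castSucc i := hk
          have h1 : (n : ℕ) < i.val := this
          exact absurd i.isLt (by omega)
        | cast k' =>
          have hk' : k' < i := by
            rwa [Fin.castSucc_lt_castSucc_iff] at hk
          simp only [gtup, Fin.snoc_castSucc]
          exact hinner.2 i hj' k' hk'

lemma RFin_init {b n : ℕ} {u : Fin (n+1) → ℕ} (hu : u ∈ RFin b (n+1)) :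
    Fin.init u ∈ RFin b n := by
  rw [mem_RFin] at hu ⊢
  refine ⟨fun j => hu.1 _, fun j hj k hk => ?_⟩
  exact hu.2 (Fin.castSucc j) hj (Fin.castSucc k) (by rwa [Fin.castSucc_lt_castSucc_iff])

lemma Vsum_eq_init (b n : ℕ) (u : Fin (n+1) → ℕ) :
    Vsum b u = Vsum b (Fin.init u) + u (Fin.last n) * repunit b (n+1) := by
  unfold Vsum
  rw [Fin.sum_univ_castSucc]
  rfl

lemma sum_eq_init (n : ℕ) (u : Fin (n+1) → ℕ) :
    (∑ j, u j) = (∑ j, Fin.init u j) + u (Fin.last n) := by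
  rw [Fin.sum_univ_castSucc]
  rfl

lemma Rbound (b : ℕ) (hb : 1 ≤ b) : ∀ ℓ (u : Fin ℓ → ℕ), u ∈ RFin b ℓ →
    Vsum b u < repunit b (ℓ+1) := by
  intro ℓ
  induction ℓ with
  | zero =>
    intro u _
    have : Vsum b u = 0 := by simp [Vsum]
    rw [this]
    exact repunit_pos b 0
  | succ n ih =>
    intro u hu
    have hinit := ih (Fin.init u) (RFin_init hu)
    rw [mem_RFin] at hu
    have htop := hu.1 (Fin.last n)
    rw [Vsum_eq_init]
    by_cases hc : u (Fin.last n) = b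
    · have hz : Vsum b (Fin.init u) = 0 := by
        unfold Vsum
        refine Finset.sum_eq_zero fun j _ => ?_
        have : Fin.init u j = 0 :=
          hu.2 (Fin.last n) hc (Fin.castSucc j) (Fin.castSucc_lt_last j)
        simp [this]
      rw [hz, hc, repunit_succ b (n+1)]
      omega
    · have : u (Fin.last n) ≤ b - 1 := by omega
      have h2 : u (Fin.last n) * repunit b (n+1) ≤ (b-1) * repunit b (n+1) :=
        Nat.mul_le_mul_right _ this
      rw [repunit_succ b (n+1)]
      have hbR : (b-1) * repunit b (n+1) + repunit b (n+1) = b * repunit b (n+1) := by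
        have : b - 1 + 1 = b := by omega
        rw [← Nat.succ_mul, Nat.succ_eq_add_one, this]
      omega

lemma Rsum (b : ℕ) (hb : 1 ≤ b) : ∀ ℓ (u : Fin ℓ → ℕ), u ∈ RFin b ℓ →
    gam b ℓ (Vsum b u) = ∑ j, u j := by
  intro ℓ
  induction ℓ with
  | zero =>
    intro u _
    have : Vsum b u = 0 := by simp [Vsum]
    simp [this, gam]
  | succ n ih =>
    intro u hu
    have hinit := ih (Fin.init u) (RFin_init hu)
    have hlt := Rbound b hb n (Fin.init u) (RFin_init hu)
    rw [Vsum_eq_init, gam_add_mul, gam_small _ _ _ hlt, hinit, sum_eq_init]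

lemma claimC (b : ℕ) (hb : 1 < b) (L : ℕ) :
    ∀ t, gam b L (repunit b t % repunit b (L+1)) ≤ 1 + repunit b t / repunit b (L+1) := by
  intro t
  induction t using Nat.strong_induction_on with
  | _ t ih =>
    set m := repunit b (L+1) with hm
    have hmpos : 0 < m := repunit_pos b L
    rcases Nat.lt_or_ge t (L+1) with h | h
    · have hlt : repunit b t < m := by
        rcases Nat.lt_or_ge t (L+1) with _ | _
        · exact repunit_strictMono b (by omega) h
        · omega
      rw [Nat.mod_eq_of_lt hlt, Nat.div_eq_of_lt hlt]
      have := gam_rep_le b (by omega) L t (by omega)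
      omega
    · set s := t - (L+1) with hs
      have hts : t = (L+1) + s := by omega
      have hid : repunit b t = repunit b s + (1 + (b-1) * repunit b s) * m := by
        rw [hts, repunit_add, pow_eq_repunit b (L+1) (by omega), ← hm]
        ring
      have hmod : repunit b t % m = repunit b s % m := by
        rw [hid, Nat.add_mul_mod_self_right]
      have hdiv : repunit b t / m = repunit b s / m + (1 + (b-1) * repunit b s) := by
        rw [hid, Nat.add_mul_div_right _ _ hmpos]
      have := ih s (by omega)
      rw [hmod, hdiv]
      omega

lemma mul_mem_grep {b a i : ℕ} {x : ℕ} (hx : x ∈ grep b a i) (k : ℕ) :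
    k * x ∈ grep b a i := by
  simpa [nsmul_eq_mul] using (grep b a i).nsmul_mem hx k

lemma aseq_mem_grep (b a i j : ℕ) (hj : 1 ≤ j) : aseq b a i j ∈ grep b a i :=
  AddSubmonoid.subset_closure ⟨j, hj, rfl⟩

lemma rep_mem_grep (b a i : ℕ) : repunit b i ∈ grep b a i := by
  have := aseq_mem_grep b a i 1 le_rfl
  simpa [aseq, repunit_zero] using this

lemma value_form (b a L : ℕ) {ℓ : ℕ} (u : Fin ℓ → ℕ) :
    (∑ j : Fin ℓ, u j * aseq b a (L+1) (j.val + 2))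
      = (∑ j, u j) * repunit b (L+1) + a * Vsum b u := by
  unfold Vsum
  rw [Finset.sum_mul, Finset.mul_sum, ← Finset.sum_add_distrib]
  refine Finset.sum_congr rfl fun j _ => ?_
  have : aseq b a (L+1) (j.val + 2) = repunit b (L+1) + a * repunit b (j.val + 1) := by
    simp [aseq]
  rw [this]
  ring

lemma grep_struct (b a L : ℕ) (hb : 1 < b) (ha : 0 < a) {s : ℕ} (hs : s ∈ grep b a (L+1)) :
    ∃ g w, w < repunit b (L+1) ∧ s = g * repunit b (L+1) + a * w ∧ gam b L w ≤ g := by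
  set m := repunit b (L+1) with hm
  have hmpos : 0 < m := repunit_pos b L
  induction hs using AddSubmonoid.closure_induction with
  | mem x hx =>
    obtain ⟨j, hj, rfl⟩ := hx
    set t := j - 1 with ht
    have h1 := claimC b hb L t
    rw [← hm] at h1
    obtain ⟨q, r, hrlt, hdm, hgq⟩ :
        ∃ q r, r < m ∧ repunit b t = r + q * m ∧ gam b L r ≤ 1 + q :=
      ⟨repunit b t / m, repunit b t % m, Nat.mod_lt _ hmpos,
        (Nat.mod_add_div' _ _).symm, h1⟩
    refine ⟨1 + a * q, r, hrlt, ?_, ?_⟩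
    · show repunit b (L+1) + a * repunit b t = _
      rw [← hm, hdm]
      ring
    · have h2 : q ≤ a * q := Nat.le_mul_of_pos_left _ ha
      omega
  | zero => exact ⟨0, 0, hmpos, by simp, by simp [gam_zero]⟩
  | add x y hx hy ihx ihy =>
    obtain ⟨g, w, hw, rfl, hg⟩ := ihx
    obtain ⟨g', w', hw', rfl, hg'⟩ := ihy
    by_cases hc : w + w' < m
    · refine ⟨g + g', w + w', hc, by ring, ?_⟩
      have := gam_subadd b (by omega) L w w'
      omega
    · obtain ⟨W, hW⟩ : ∃ W, W = w + w' - m := ⟨_, rfl⟩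
      have hww : w + w' = W + m := by omega
      refine ⟨g + g' + a, W, by omega, ?_, ?_⟩
      · calc g * m + a * w + (g' * m + a * w') = (g + g') * m + a * (w + w') := by ring
          _ = (g + g' + a) * m + a * W := by rw [hww]; ring
      · have h1 := gam_add_top b (by omega) L W
        rw [← hm, show W + m = w + w' by omega] at h1
        have h2 := gam_subadd b (by omega) L w w'
        omega

lemma canc (a m : ℕ) (hm : 0 < m) (hgcd : Nat.gcd m a = 1) {g1 w1 g2 w2 : ℕ}
    (h1 : w1 < m) (h2 : w2 < m) (heq : g1 * m + a * w1 = g2 * m + a * w2) :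
    w1 = w2 ∧ g1 = g2 := by
  have e1 : (g1 * m + a * w1) % m = (a * w1) % m := by
    rw [mul_comm g1 m, Nat.mul_add_mod]
  have e2 : (g2 * m + a * w2) % m = (a * w2) % m := by
    rw [mul_comm g2 m, Nat.mul_add_mod]
  have hmod : a * w1 ≡ a * w2 [MOD m] := by
    show (a * w1) % m = (a * w2) % m
    rw [← e1, ← e2, heq]
  have hw : w1 = w2 := by
    have hmeq := Nat.ModEq.cancel_left_of_coprime hgcd hmod
    have h : w1 % m = w2 % m := hmeq
    rwa [Nat.mod_eq_of_lt h1, Nat.mod_eq_of_lt h2] at h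
  subst hw
  have hgm : g1 * m = g2 * m := by omega
  exact ⟨rfl, Nat.eq_of_mul_eq_mul_right hm hgm⟩

theorem stmt_8 (b a n i : ℕ) (hb : 1 < b) (hn : 1 < n) (ha : 0 < a)
    (hi : 3 ≤ i) (hin : i ≤ n) (hgcd : Nat.gcd (repunit b i) a = 1) :
    ∀ ω : ℕ, ω ∈ Apery (grep b a i) (repunit b i) ↔
      (ω = b * aseq b a i i ∨
        ∃ u ∈ RFin b (i - 2), ∃ ui < b,
          ω = (∑ j : Fin (i - 2), u j * aseq b a (i - 1) (j.val + 2))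
              + b ^ (i - 1) * (∑ j : Fin (i - 2), u j)
              + ui * aseq b a i i) := by
  obtain ⟨e, rfl⟩ : ∃ e, i = e + 2 := ⟨i - 2, by omega⟩
  intro ω
  show ω ∈ Apery (grep b a (e+2)) (repunit b (e+2)) ↔
      (ω = b * aseq b a (e+2) (e+2) ∨
        ∃ u ∈ RFin b e, ∃ ui < b,
          ω = (∑ j : Fin e, u j * aseq b a (e+1) (j.val + 2))
              + b ^ (e+1) * (∑ j : Fin e, u j)
              + ui * aseq b a (e+2) (e+2))
  have hRpos : 0 < repunit b (e+1) := repunit_pos b e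
  have hmpos : 0 < repunit b (e+2) := repunit_pos b (e+1)
  have hmR : repunit b (e+2) = b * repunit b (e+1) + 1 := repunit_succ b (e+1)
  have hexpr : ∀ (u : Fin e → ℕ) (ui : ℕ),
      (∑ j : Fin e, u j * aseq b a (e+1) (j.val + 2)) + b ^ (e+1) * (∑ j, u j)
        + ui * aseq b a (e+2) (e+2)
      = ((∑ j, u j) + ui) * repunit b (e+2)
        + a * (Vsum b u + ui * repunit b (e+1)) := by
    intro u ui
    rw [value_form b a e u]
    have h1 : aseq b a (e+2) (e+2) = repunit b (e+2) + a * repunit b (e+1) := rfl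
    rw [h1, repunit_succ' b (e+1)]
    ring
  constructor
  · rintro ⟨hωS, hno⟩
    obtain ⟨g, w, hw, rfl, hg⟩ := grep_struct b a (e+1) hb ha hωS
    rw [show repunit b (e+1+1) = repunit b (e+2) from rfl] at hw hno ⊢
    have htmem := gtup_mem b (by omega) (e+1) w hw
    have htval := gtup_val b (e+1) w hw
    have htsum := gtup_sum b (e+1) w hw
    have hfc_val : (∑ j : Fin (e+1), gtup b (e+1) w j * aseq b a (e+2) (j.val+2))
        = gam b (e+1) w * repunit b (e+2) + a * w := by
      rw [value_form b a (e+1) (gtup b (e+1) w), htsum, htval]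
    have hfcS : (∑ j : Fin (e+1), gtup b (e+1) w j * aseq b a (e+2) (j.val+2))
        ∈ grep b a (e+2) :=
      AddSubmonoid.sum_mem _ fun j _ =>
        mul_mem_grep (aseq_mem_grep b a (e+2) (j.val+2) (by omega)) _
    have hgeq : gam b (e+1) w = g := by
      by_contra hne
      obtain ⟨k, hk⟩ : ∃ k, g = gam b (e+1) w + (k + 1) :=
        ⟨g - gam b (e+1) w - 1, by omega⟩
      apply hno
      refine ⟨(∑ j : Fin (e+1), gtup b (e+1) w j * aseq b a (e+2) (j.val+2))
          + k * repunit b (e+2), ?_, ?_⟩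
      · exact AddSubmonoid.add_mem _ hfcS (mul_mem_grep (rep_mem_grep b a (e+2)) _)
      · rw [hfc_val, hk]
        ring
    by_cases hsp : w = b * repunit b (e+1)
    · left
      have hgb : g = b := by rw [← hgeq, hsp, gam_mul_top]
      rw [hgb, hsp]
      show b * repunit b (e+2) + a * (b * repunit b (e+1))
        = b * (repunit b (e+2) + a * repunit b (e+1))
      ring
    · right
      have hwlt : w < b * repunit b (e+1) := by omega
      have hmod : w % repunit b (e+1) < repunit b (e+1) := Nat.mod_lt _ hRpos
      refine ⟨gtup b e (w % repunit b (e+1)), gtup_mem b (by omega) e _ hmod,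
        w / repunit b (e+1), (Nat.div_lt_iff_lt_mul hRpos).mpr hwlt, ?_⟩
      have hval2 := gtup_val b e _ hmod
      have hsum2 := gtup_sum b e _ hmod
      rw [hexpr, hval2, hsum2]
      have hsplit : gam b (e+1) w
          = w / repunit b (e+1) + gam b e (w % repunit b (e+1)) := by
        simp [gam]
      have hdm : w % repunit b (e+1) + w / repunit b (e+1) * repunit b (e+1) = w :=
        Nat.mod_add_div' w _
      have e2 : a * (w % repunit b (e+1) + w / repunit b (e+1) * repunit b (e+1))
          = a * w := by rw [hdm]
      have e3 : (gam b e (w % repunit b (e+1)) + w / repunit b (e+1)) * repunit b (e+2)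
          = gam b (e+1) w * repunit b (e+2) := by rw [hsplit]; ring
      rw [e2, e3, hgeq]
  · rintro (rfl | ⟨u, hu, ui, hui, rfl⟩)
    · constructor
      · exact mul_mem_grep (aseq_mem_grep b a (e+2) (e+2) (by omega)) b
      · rintro ⟨t, htS, heq⟩
        obtain ⟨g, v, hv, rfl, hgam⟩ := grep_struct b a (e+1) hb ha htS
        rw [show repunit b (e+1+1) = repunit b (e+2) from rfl] at hv heq
        have hlhs : b * aseq b a (e+2) (e+2)
            = b * repunit b (e+2) + a * (b * repunit b (e+1)) := by
          show b * (repunit b (e+2) + a * repunit b (e+1)) = _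
          ring
        have hgm : (g + 1) * repunit b (e+2) = g * repunit b (e+2) + repunit b (e+2) := by
          ring
        have heq2 : b * repunit b (e+2) + a * (b * repunit b (e+1))
            = (g + 1) * repunit b (e+2) + a * v := by
          rw [hlhs] at heq
          omega
        have hwlt : b * repunit b (e+1) < repunit b (e+2) := by omega
        obtain ⟨hveq, hgeq⟩ := canc a (repunit b (e+2)) hmpos hgcd hwlt hv heq2
        have hgv : gam b (e+1) v = b := by rw [← hveq, gam_mul_top]
        omega
    · have hVlt : Vsum b u < repunit b (e+1) := Rbound b (by omega) e u hu
      have hbr : (b - 1) * repunit b (e+1) + repunit b (e+1) = b * repunit b (e+1) := by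
        have hb1 : b - 1 + 1 = b := by omega
        calc (b-1) * repunit b (e+1) + repunit b (e+1)
            = (b - 1 + 1) * repunit b (e+1) := by ring
          _ = b * repunit b (e+1) := by rw [hb1]
      have huiR : ui * repunit b (e+1) ≤ (b - 1) * repunit b (e+1) :=
        Nat.mul_le_mul_right _ (by omega)
      have hWlt : Vsum b u + ui * repunit b (e+1) < repunit b (e+2) := by omega
      have hgamW : gam b (e+1) (Vsum b u + ui * repunit b (e+1)) = (∑ j, u j) + ui := by
        have h1 : (Vsum b u + ui * repunit b (e+1)) / repunit b (e+1) = ui := by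
          rw [Nat.add_mul_div_right _ _ hRpos, Nat.div_eq_of_lt hVlt, Nat.zero_add]
        have h2 : (Vsum b u + ui * repunit b (e+1)) % repunit b (e+1) = Vsum b u := by
          rw [Nat.add_mul_mod_self_right, Nat.mod_eq_of_lt hVlt]
        have h3 : gam b (e+1) (Vsum b u + ui * repunit b (e+1))
            = (Vsum b u + ui * repunit b (e+1)) / repunit b (e+1)
              + gam b e ((Vsum b u + ui * repunit b (e+1)) % repunit b (e+1)) := by
          simp [gam]
        rw [h3, h1, h2, Rsum b (by omega) e u hu]
        omega
      constructor
      · have hcombo : (∑ j : Fin e, u j * aseq b a (e+2) (j.val+2))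
            + ui * aseq b a (e+2) (e+2) ∈ grep b a (e+2) :=
          AddSubmonoid.add_mem _
            (AddSubmonoid.sum_mem _ fun j _ =>
              mul_mem_grep (aseq_mem_grep b a (e+2) (j.val+2) (by omega)) _)
            (mul_mem_grep (aseq_mem_grep b a (e+2) (e+2) (by omega)) _)
        have hceq : (∑ j : Fin e, u j * aseq b a (e+2) (j.val+2))
            + ui * aseq b a (e+2) (e+2)
            = (∑ j : Fin e, u j * aseq b a (e+1) (j.val + 2)) + b ^ (e+1) * (∑ j, u j)
              + ui * aseq b a (e+2) (e+2) := by
          rw [hexpr, value_form b a (e+1) u]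
          have h1 : aseq b a (e+2) (e+2) = repunit b (e+2) + a * repunit b (e+1) := rfl
          rw [h1]
          ring
        rw [← hceq]
        exact hcombo
      · rintro ⟨t, htS, heq⟩
        obtain ⟨g, v, hv, rfl, hgam⟩ := grep_struct b a (e+1) hb ha htS
        rw [show repunit b (e+1+1) = repunit b (e+2) from rfl] at hv heq
        rw [hexpr] at heq
        have hgm : (g + 1) * repunit b (e+2) = g * repunit b (e+2) + repunit b (e+2) := by
          ring
        have heq2 : ((∑ j, u j) + ui) * repunit b (e+2)
              + a * (Vsum b u + ui * repunit b (e+1))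
            = (g + 1) * repunit b (e+2) + a * v := by omega
        obtain ⟨hveq, hgeq⟩ := canc a (repunit b (e+2)) hmpos hgcd hWlt hv heq2
        rw [← hveq] at hgam
        rw [hgamW] at hgam
        omega
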